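/- arXiv:2403.02539 — 5 statements merged into one kernel-verified Lean document; each statement's English description precedes it below -/
import Mathlib

section
/- Let (Ω, 𝓕, ℙ) be a probability space, let A and B be events with p := ℙ(B) ∈ (0,1), set F := ℙ[A | B], γ ∈ ℝ and d := 1 − F + F·exp(γ). Then E[ 1_B·1_A·(1 + ((1−p)/p)·exp(γ)/d²) − 1_B·((1−p)/p)·F·exp(γ)/d² + 1_{Bᶜ}·F·exp(γ)/d ] = p·F + (1−p)·F·exp(γ)/d. (This is the statement that the uncensored-data influence function φ_t = φ_{t1} + φ_{t2} + φ_{t3} has mean ψ_t within a covariate stratum.) -/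
open MeasureTheory Real

/-- Conditional probability `ℙ[E | D] = ℙ(E ∩ D) / ℙ(D)` (as a real number). -/
noncomputable def condProb {Ω : Type*} [MeasurableSpace Ω] (μ : Measure Ω) (E D : Set Ω) : ℝ :=
  (μ (E ∩ D)).toReal / (μ D).toReal

/-!
Since `1_B · 1_A = 1_{A ∩ B}`, the integrand is a combination of three indicators, so its mean is
`ℙ(A ∩ B) c₁ - ℙ(B) c₂ + ℙ(Bᶜ) c₃`. With `ℙ(A ∩ B) = F p` the two terms carrying `exp γ / d²`
cancel, leaving `p F + (1 - p) F exp γ / d`.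
-/

theorem measureReal_inter_eq_condProb_mul {Ω : Type*} [MeasurableSpace Ω] (μ : Measure Ω)
    [IsFiniteMeasure μ] (A B : Set Ω) : μ.real (A ∩ B) = condProb μ A B * μ.real B := by
  rcases eq_or_ne (μ.real B) 0 with hB | hB
  · rw [hB, mul_zero]
    exact le_antisymm (hB ▸ measureReal_mono Set.inter_subset_right) measureReal_nonneg
  · exact (div_mul_cancel₀ _ hB).symm

theorem integral_indicator_mul_indicator_sub_indicator_add_indicator_compl {Ω : Type*}
    [MeasurableSpace Ω] (μ : Measure Ω) [IsProbabilityMeasure μ] {A B : Set Ω}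
    (hA : MeasurableSet A) (hB : MeasurableSet B) (a b c : ℝ) :
    ∫ ω, (B.indicator (fun _ => (1:ℝ)) ω * A.indicator (fun _ => 1) ω * a
        - B.indicator (fun _ => 1) ω * b + Bᶜ.indicator (fun _ => 1) ω * c) ∂μ
      = μ.real (A ∩ B) * a - μ.real B * b + (1 - μ.real B) * c := by
  have indicator_inter (ω : Ω) : B.indicator (fun _ => (1:ℝ)) ω * A.indicator (fun _ => 1) ω
      = (A ∩ B).indicator (fun _ => 1) ω := by
    by_cases hAω : ω ∈ A <;> by_cases hBω : ω ∈ B <;> simp [hAω, hBω]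
  have integrable {s : Set Ω} (hs : MeasurableSet s) :
      Integrable (s.indicator (fun _ => (1:ℝ))) μ :=
    (integrable_const 1).indicator hs
  simp_rw [indicator_inter]
  have iAB := (integrable (hA.inter hB)).mul_const a
  have iB := (integrable hB).mul_const b
  rw [integral_add ?_ ((integrable hB.compl).mul_const c), integral_sub iAB iB]
  · simp only [integral_mul_const, integral_indicator_const _ (hA.inter hB),
      integral_indicator_const _ hB, integral_indicator_const _ hB.compl,
      probReal_compl_eq_one_sub hB, smul_eq_mul, mul_one]
  · exact iAB.sub iB

theorem stmt_2_general {Ω : Type*} [MeasurableSpace Ω] (μ : Measure Ω) [IsProbabilityMeasure μ]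
    (A B : Set Ω) (hA : MeasurableSet A) (hB : MeasurableSet B) (γ : ℝ) :
    ∫ ω, (B.indicator (fun _ => (1:ℝ)) ω * A.indicator (fun _ => (1:ℝ)) ω *
            (1 + ((1 - (μ B).toReal) / (μ B).toReal) * Real.exp γ /
              (1 - condProb μ A B + condProb μ A B * Real.exp γ) ^ 2)
        - B.indicator (fun _ => (1:ℝ)) ω * ((1 - (μ B).toReal) / (μ B).toReal) *
            condProb μ A B * Real.exp γ /
              (1 - condProb μ A B + condProb μ A B * Real.exp γ) ^ 2
        + Bᶜ.indicator (fun _ => (1:ℝ)) ω * condProb μ A B * Real.exp γ /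
            (1 - condProb μ A B + condProb μ A B * Real.exp γ)) ∂μ
      = (μ B).toReal * condProb μ A B +
          (1 - (μ B).toReal) * condProb μ A B * Real.exp γ /
            (1 - condProb μ A B + condProb μ A B * Real.exp γ) := by
  simp only [← measureReal_def]
  set p := μ.real B
  set F := condProb μ A B
  set d := 1 - F + F * exp γ
  calc _ = ∫ ω, (B.indicator (fun _ => (1:ℝ)) ω * A.indicator (fun _ => 1) ω
            * (1 + (1 - p) / p * exp γ / d ^ 2)
          - B.indicator (fun _ => 1) ω * ((1 - p) / p * F * exp γ / d ^ 2)
          + Bᶜ.indicator (fun _ => 1) ω * (F * exp γ / d)) ∂μ := by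
        congr 1; ext ω; ring
    _ = _ := by
      rw [integral_indicator_mul_indicator_sub_indicator_add_indicator_compl μ hA hB,
        measureReal_inter_eq_condProb_mul]
      ring

/-- The uncensored-data influence function `φ_t = φ_{t1} + φ_{t2} + φ_{t3}` has mean
`ψ_t = p·F + (1−p)·F·eᵞ/d` within a covariate stratum, where `p = ℙ(B)`,
`F = ℙ[A|B]` and `d = 1 − F + F·eᵞ`. -/
theorem stmt_2 {Ω : Type*} [MeasurableSpace Ω] (μ : Measure Ω) [IsProbabilityMeasure μ]
    (A B : Set Ω) (hA : MeasurableSet A) (hB : MeasurableSet B) (γ : ℝ)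
    (hp : (μ B).toReal ∈ Set.Ioo (0:ℝ) 1) :
    ∫ ω, (B.indicator (fun _ => (1:ℝ)) ω * A.indicator (fun _ => (1:ℝ)) ω *
            (1 + ((1 - (μ B).toReal) / (μ B).toReal) * Real.exp γ /
              (1 - condProb μ A B + condProb μ A B * Real.exp γ) ^ 2)
        - B.indicator (fun _ => (1:ℝ)) ω * ((1 - (μ B).toReal) / (μ B).toReal) *
            condProb μ A B * Real.exp γ /
              (1 - condProb μ A B + condProb μ A B * Real.exp γ) ^ 2
        + Bᶜ.indicator (fun _ => (1:ℝ)) ω * condProb μ A B * Real.exp γ /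
            (1 - condProb μ A B + condProb μ A B * Real.exp γ)) ∂μ
      = (μ B).toReal * condProb μ A B +
          (1 - (μ B).toReal) * condProb μ A B * Real.exp γ /
            (1 - condProb μ A B + condProb μ A B * Real.exp γ) :=
  stmt_2_general μ A B hA hB γ
end

section
/- Let Y and C be independent random variables with values in [0,∞) on a probability space (Ω, 𝓕, ℙ), with atomless laws (so in particular ℙ[Y = C] = 0), let G(u) = ℙ[C ≥ u], let s > 0, and let G* : [0,∞) → ℝ be measurable with ε ≤ G*(u) ≤ 1 on [0,s] for some ε > 0. With Ỹ = min(Y,C) and Δ = 1{Y ≤ C}, E[ (Δ + (1−Δ)·1{Ỹ ≥ s}) / G*(min(Ỹ,s)) ] = E[ 1{Y ≤ s}·G(Y)/G*(Y) + 1{Y > s}·G(s)/G*(s) ]. (This is Lemma 1 of the paper in its per-stratum form: the inverse-weighted at-risk indicator with an arbitrary, possibly misspecified, weight function G* has the stated uncensored-data representation.) -/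
/-!
Integrate out the censoring time first. By independence the joint law of `(Y, C)` is the
product of the marginals, and for fixed `Y = y` the integrand equals `1 / G*(min y s)` on
`{C ≥ y}` and `1 / G*(s)` on `{s ≤ C < y}`. Its `C`-integral is therefore `G(y) / G*(y)`
when `y ≤ s`, and `(G(y) + (G(s) - G(y))) / G*(s) = G(s) / G*(s)` when `s < y`, since the two
events then partition `{C ≥ s}`; this is the uncensored integrand.
-/

open MeasureTheory ProbabilityTheory Set

section IPCW

variable (Gstar : ℝ → ℝ) (s : ℝ)

/-- The inverse-probability-of-censoring weighted at-risk indicator at `(Y, C) = (y, c)`. -/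
noncomputable def atRiskIPCW (y c : ℝ) : ℝ :=
  ((if y ≤ c then (1:ℝ) else 0)
      + (1 - if y ≤ c then (1:ℝ) else 0) * (if s ≤ min y c then (1:ℝ) else 0))
    / Gstar (min (min y c) s)

/-- The uncensored-data counterpart of `atRiskIPCW`, for a censoring survival function `G`. -/
noncomputable def uncensoredIPCW (G : ℝ → ℝ) (y : ℝ) : ℝ :=
  (if y ≤ s then (1:ℝ) else 0) * G y / Gstar y + (if s < y then (1:ℝ) else 0) * G s / Gstar s

theorem atRiskIPCW_eq_indicator (y c : ℝ) :
    atRiskIPCW Gstar s y c =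
      (Ici y).indicator (fun _ => (Gstar (min y s))⁻¹) c
        + (Ico s y).indicator (fun _ => (Gstar s)⁻¹) c := by
  unfold atRiskIPCW
  by_cases hyc : y ≤ c
  · have hc : c ∉ Ico s y := fun h => (not_lt.mpr hyc) h.2
    simp [hyc, hc]
  · have hcy : c < y := lt_of_not_ge hyc
    by_cases hsc : s ≤ c
    · simp [hyc, min_eq_right hcy.le, hsc, hcy]
    · simp [hyc, min_eq_right hcy.le, hsc]

theorem measurable_atRiskIPCW (hGstar : Measurable Gstar) :
    Measurable (Function.uncurry (atRiskIPCW Gstar s)) := by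
  unfold atRiskIPCW Function.uncurry
  have hle : MeasurableSet {p : ℝ × ℝ | p.1 ≤ p.2} := measurableSet_le measurable_fst measurable_snd
  have hs : MeasurableSet {p : ℝ × ℝ | s ≤ min p.1 p.2} :=
    measurableSet_le measurable_const (measurable_fst.min measurable_snd)
  refine Measurable.div ?_ (hGstar.comp ((measurable_fst.min measurable_snd).min measurable_const))
  exact (measurable_const.ite hle measurable_const).add
    ((measurable_const.sub (measurable_const.ite hle measurable_const)).mul
      (measurable_const.ite hs measurable_const))

theorem abs_atRiskIPCW_le {ε : ℝ} (hε : 0 < ε) (hs : 0 ≤ s)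
    (hGbd : ∀ u ∈ Icc (0:ℝ) s, ε ≤ Gstar u) {y : ℝ} (hy : 0 ≤ y) (c : ℝ) :
    |atRiskIPCW Gstar s y c| ≤ ε⁻¹ := by
  have hinv : ∀ u ∈ Icc (0:ℝ) s, |(Gstar u)⁻¹| ≤ ε⁻¹ := fun u hu => by
    have hεu := hGbd u hu
    rw [abs_inv, abs_of_pos (hε.trans_le hεu)]
    exact inv_anti₀ hε hεu
  rw [atRiskIPCW_eq_indicator]
  by_cases hyc : y ≤ c
  · have hc : c ∉ Ico s y := fun h => (not_lt.mpr hyc) h.2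
    simpa [hyc, hc] using hinv _ ⟨le_min hy hs, min_le_right _ _⟩
  · by_cases hsc : s ≤ c
    · simpa [hyc, hsc, lt_of_not_ge hyc] using hinv s ⟨hs, le_rfl⟩
    · simp [hyc, hsc, hε.le]

theorem integral_atRiskIPCW (ν : Measure ℝ) [IsFiniteMeasure ν] (y : ℝ) :
    ∫ c, atRiskIPCW Gstar s y c ∂ν = uncensoredIPCW Gstar s (fun u => ν.real (Ici u)) y := by
  simp_rw [atRiskIPCW_eq_indicator]
  rw [integral_add ((integrable_const _).indicator measurableSet_Ici)
      ((integrable_const _).indicator measurableSet_Ico),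
    integral_indicator_const _ measurableSet_Ici, integral_indicator_const _ measurableSet_Ico]
  unfold uncensoredIPCW
  by_cases hys : y ≤ s
  · simp [hys, div_eq_mul_inv]
  · have hsy : s < y := lt_of_not_ge hys
    have hsplit : ν.real (Ici s) = ν.real (Ico s y) + ν.real (Ici y) := by
      rw [← Ico_union_Ici_eq_Ici hsy.le,
        measureReal_union ((Iio_disjoint_Ici le_rfl).mono_left Ico_subset_Iio_self)
          measurableSet_Ici]
    simp only [hys, hsy, min_eq_right hsy.le, hsplit, if_true, if_false, smul_eq_mul]
    ring

end IPCW

theorem ProbabilityTheory.IndepFun.integral_comp_eq_integral_integral {Ω α β E : Type*} [MeasurableSpace Ω]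
    [MeasurableSpace α] [MeasurableSpace β] [NormedAddCommGroup E] [NormedSpace ℝ E]
    {μ : Measure Ω} [IsFiniteMeasure μ] {X : Ω → α} {Y : Ω → β} (hXY : IndepFun X Y μ)
    (hX : Measurable X) (hY : Measurable Y) {f : α × β → E} (hf : StronglyMeasurable f)
    (hfi : Integrable (fun ω => f (X ω, Y ω)) μ) :
    ∫ ω, f (X ω, Y ω) ∂μ = ∫ x, ∫ y, f (x, y) ∂(μ.map Y) ∂(μ.map X) := by
  have hlaw : μ.map (fun ω => (X ω, Y ω)) = (μ.map X).prod (μ.map Y) :=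
    (indepFun_iff_map_prod_eq_prod_map_map hX.aemeasurable hY.aemeasurable).mp hXY
  have hXY_meas : AEMeasurable (fun ω => (X ω, Y ω)) μ := (hX.prodMk hY).aemeasurable
  have hfi' : Integrable f (μ.map fun ω => (X ω, Y ω)) :=
    (integrable_map_measure hf.aestronglyMeasurable hXY_meas).mpr hfi
  rw [← integral_prod f (hlaw ▸ hfi'), ← hlaw, integral_map hXY_meas hf.aestronglyMeasurable]

theorem stmt_5_general {Ω : Type*} [MeasurableSpace Ω] (μ : Measure Ω) [IsProbabilityMeasure μ]
    (Y C : Ω → ℝ) (hY : Measurable Y) (hC : Measurable C)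
    (hYnn : ∀ ω, 0 ≤ Y ω)
    (hindep : IndepFun Y C μ)
    (s : ℝ) (hs : 0 < s)
    (Gstar : ℝ → ℝ) (hGstar : Measurable Gstar)
    (ε : ℝ) (hε : 0 < ε) (hGbd : ∀ u ∈ Set.Icc (0:ℝ) s, ε ≤ Gstar u ∧ Gstar u ≤ 1)
    (G : ℝ → ℝ) (hG : ∀ u, G u = (μ {ω | u ≤ C ω}).toReal) :
    ∫ ω, ((if Y ω ≤ C ω then (1:ℝ) else 0)
          + (1 - if Y ω ≤ C ω then (1:ℝ) else 0) * (if s ≤ min (Y ω) (C ω) then (1:ℝ) else 0))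
        / Gstar (min (min (Y ω) (C ω)) s) ∂μ
      = ∫ ω, ((if Y ω ≤ s then (1:ℝ) else 0) * G (Y ω) / Gstar (Y ω)
          + (if s < Y ω then (1:ℝ) else 0) * G s / Gstar s) ∂μ := by
  have hG_law : G = fun u => (μ.map C).real (Ici u) := funext fun u => by
    rw [hG, measureReal_def, Measure.map_apply hC measurableSet_Ici]; rfl
  have hG_meas : Measurable G := by
    refine Antitone.measurable fun a b hab => ?_
    simp only [hG_law]
    exact measureReal_mono (Ici_subset_Ici.mpr hab)
  have hF_meas := measurable_atRiskIPCW Gstar s hGstar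
  have hF_int : Integrable (fun ω => atRiskIPCW Gstar s (Y ω) (C ω)) μ :=
    .of_bound (hF_meas.comp (hY.prodMk hC)).aestronglyMeasurable ε⁻¹ <| .of_forall fun ω =>
      abs_atRiskIPCW_le Gstar s hε hs.le (fun u hu => (hGbd u hu).1) (hYnn ω) (C ω)
  have hg_meas : Measurable (uncensoredIPCW Gstar s G) := by
    unfold uncensoredIPCW
    exact ((measurable_const.ite measurableSet_Iic measurable_const).mul hG_meas |>.div hGstar).add
      (((measurable_const.ite measurableSet_Ioi measurable_const).mul measurable_const).div
        measurable_const)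
  calc ∫ ω, atRiskIPCW Gstar s (Y ω) (C ω) ∂μ
      = ∫ y, ∫ c, atRiskIPCW Gstar s y c ∂(μ.map C) ∂(μ.map Y) :=
        hindep.integral_comp_eq_integral_integral hY hC hF_meas.stronglyMeasurable hF_int
    _ = ∫ y, uncensoredIPCW Gstar s G y ∂(μ.map Y) := by
        simp_rw [integral_atRiskIPCW, hG_law]
    _ = ∫ ω, uncensoredIPCW Gstar s G (Y ω) ∂μ :=
        integral_map hY.aemeasurable hg_meas.aestronglyMeasurable

/-- Lemma 1 of the paper in per-stratum form: with `Ỹ = min(Y,C)`, `Δ = 1{Y ≤ C}`,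
true censoring survival `G(u) = ℙ[C ≥ u]`, and any candidate weight `G*` bounded
away from 0 on `[0,s]`,
`E[(Δ + (1−Δ)·1{Ỹ ≥ s})/G*(min(Ỹ,s))] = E[1{Y ≤ s}·G(Y)/G*(Y) + 1{Y > s}·G(s)/G*(s)]`. -/
theorem stmt_5 {Ω : Type*} [MeasurableSpace Ω] (μ : Measure Ω) [IsProbabilityMeasure μ]
    (Y C : Ω → ℝ) (hY : Measurable Y) (hC : Measurable C)
    (hYnn : ∀ ω, 0 ≤ Y ω) (hCnn : ∀ ω, 0 ≤ C ω)
    (hindep : IndepFun Y C μ)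
    (hYatom : NoAtoms (μ.map Y)) (hCatom : NoAtoms (μ.map C))
    (s : ℝ) (hs : 0 < s)
    (Gstar : ℝ → ℝ) (hGstar : Measurable Gstar)
    (ε : ℝ) (hε : 0 < ε) (hGbd : ∀ u ∈ Set.Icc (0:ℝ) s, ε ≤ Gstar u ∧ Gstar u ≤ 1)
    (G : ℝ → ℝ) (hG : ∀ u, G u = (μ {ω | u ≤ C ω}).toReal) :
    ∫ ω, ((if Y ω ≤ C ω then (1:ℝ) else 0)
          + (1 - if Y ω ≤ C ω then (1:ℝ) else 0) * (if s ≤ min (Y ω) (C ω) then (1:ℝ) else 0))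
        / Gstar (min (min (Y ω) (C ω)) s) ∂μ
      = ∫ ω, ((if Y ω ≤ s then (1:ℝ) else 0) * G (Y ω) / Gstar (Y ω)
          + (if s < Y ω then (1:ℝ) else 0) * G s / Gstar s) ∂μ :=
  stmt_5_general μ Y C hY hC hYnn hindep s hs Gstar hGstar ε hε hGbd G hG
end

section
/- Let Y and C be independent random variables with values in [0,∞) on a probability space (Ω, 𝓕, ℙ), with atomless laws, and let s > 0. Let G* : [0,∞) → (0,1] be continuously differentiable with G*(0) = 1. With Ỹ = min(Y,C) and Δ = 1{Y ≤ C}, E[ (Δ + (1−Δ)·1{Ỹ ≥ s}) / G*(min(Ỹ,s)) + (1−Δ)·1{Ỹ < s} / G*(Ỹ) + ∫₀^{Ỹ} 1{u < s}·(G*)′(u)/G*(u)² du ] = 1. (This is the identity E[h_t(G*)(Õ)] = 1 from Lemma 2 in its per-stratum form: the normalizing term of the influence-function estimating equation has mean one for ANY candidate censoring survival function G*, where the cumulative hazard associated with G* is Λ*(u) = −log G*(u), so that −dΛ*(u)/G*(u) = (G*)′(u)/G*(u)² du.) -/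
/- The integrand is identically `1`. The truncated integrand `1{u < s} G*′(u)/G*(u)²` is the right
derivative of `u ↦ -1/G*(min u s)`, so the integral term equals `1 - 1/G*(min Ỹ s)`; in each of
the three cases `Δ = 1`, `Δ = 0 ∧ Ỹ ≥ s`, `Δ = 0 ∧ Ỹ < s` the two quotients add up to
`1/G*(min Ỹ s)`. -/

open MeasureTheory ProbabilityTheory Set

section InverseAntiderivative

variable {G : ℝ → ℝ} (hG : ContDiffOn ℝ 1 G (Ici 0)) (hGpos : ∀ u, 0 ≤ u → 0 < G u)
include hG hGpos

lemma hasDerivWithinAt_neg_inv_of_contDiffOn {u : ℝ} (hu : 0 ≤ u) :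
    HasDerivWithinAt (fun v => -(G v)⁻¹) (derivWithin G (Ici 0) u / G u ^ 2) (Ici 0) u := by
  have hderiv := ((hG.differentiableOn one_ne_zero) u hu).hasDerivWithinAt
  have h := (hderiv.inv (hGpos u hu).ne').neg
  rwa [neg_div, neg_neg] at h

lemma hasDerivWithinAt_neg_inv_min {s u : ℝ} (hu : 0 ≤ u) :
    HasDerivWithinAt (fun v => -(G (min v s))⁻¹)
      (if u < s then derivWithin G (Ici 0) u / G u ^ 2 else 0) (Ioi u) u := by
  split_ifs with hus
  · have hmin : (fun v => -(G (min v s))⁻¹) =ᶠ[nhdsWithin u (Ioi u)] fun v => -(G v)⁻¹ := by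
      filter_upwards [nhdsWithin_le_nhds (Iio_mem_nhds hus)] with v hv
      rw [min_eq_left (le_of_lt hv)]
    exact ((hasDerivWithinAt_neg_inv_of_contDiffOn hG hGpos hu).mono
      (Ioi_subset_Ici hu)).congr_of_eventuallyEq hmin (by rw [min_eq_left hus.le])
  · refine (hasDerivWithinAt_const u (Ioi u) (-(G s)⁻¹)).congr_of_eventuallyEq ?_ ?_
    · filter_upwards [self_mem_nhdsWithin] with v hv
      rw [min_eq_right (le_trans (not_lt.mp hus) (le_of_lt hv))]
    · rw [min_eq_right (not_lt.mp hus)]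

lemma intervalIntegrable_indicator_derivWithin_div_sq {s a b : ℝ} (ha : 0 ≤ a) (hb : 0 ≤ b) :
    IntervalIntegrable (fun u => if u < s then derivWithin G (Ici 0) u / G u ^ 2 else 0)
      volume a b := by
  have hcont : ContinuousOn (fun u => derivWithin G (Ici 0) u / G u ^ 2) (Ici 0) :=
    (hG.continuousOn_derivWithin (uniqueDiffOn_Ici 0) le_rfl).div (hG.continuousOn.pow 2)
      fun u hu => pow_ne_zero 2 (hGpos u hu).ne'
  have hint := (hcont.mono fun x hx => (le_min ha hb).trans hx.1).intervalIntegrable (μ := volume)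
  rw [intervalIntegrable_iff] at hint ⊢
  convert hint.indicator (measurableSet_Iio (a := s)) using 1
  ext u
  simp only [indicator_apply, mem_Iio]

lemma integral_indicator_derivWithin_div_sq {s m : ℝ} (hs : 0 ≤ s) (hm : 0 ≤ m) :
    ∫ u in (0:ℝ)..m, (if u < s then derivWithin G (Ici 0) u / G u ^ 2 else 0)
      = (G 0)⁻¹ - (G (min m s))⁻¹ := by
  have hcont : ContinuousOn (fun v => -(G (min v s))⁻¹) (Icc 0 m) :=
    ((hG.continuousOn.comp (continuous_id.min continuous_const).continuousOn
      fun v hv => le_min hv.1 hs).inv₀ fun v hv => (hGpos _ (le_min hv.1 hs)).ne').neg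
  rw [intervalIntegral.integral_eq_sub_of_hasDeriv_right_of_le hm hcont
    (fun u hu => hasDerivWithinAt_neg_inv_min hG hGpos hu.1.le)
    (intervalIntegrable_indicator_derivWithin_div_sq hG hGpos le_rfl hm), min_eq_left hs]
  ring

end InverseAntiderivative

lemma censoringWeightedIntegrand_eq_one {G : ℝ → ℝ} (hG : ContDiffOn ℝ 1 G (Ici 0))
    (hGpos : ∀ u, 0 ≤ u → 0 < G u) (hG0 : G 0 = 1) {s y c : ℝ} (hs : 0 ≤ s)
    (hy : 0 ≤ y) (hc : 0 ≤ c) :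
    ((if y ≤ c then (1:ℝ) else 0)
        + (1 - if y ≤ c then (1:ℝ) else 0) * (if s ≤ min y c then (1:ℝ) else 0))
          / G (min (min y c) s)
      + (1 - if y ≤ c then (1:ℝ) else 0) * (if min y c < s then (1:ℝ) else 0) / G (min y c)
      + ∫ u in (0:ℝ)..(min y c), (if u < s then derivWithin G (Ici 0) u / (G u) ^ 2 else 0)
      = 1 := by
  have hm : 0 ≤ min y c := le_min hy hc
  rw [integral_indicator_derivWithin_div_sq hG hGpos hs hm, hG0]
  by_cases hyc : y ≤ c
  · have hpos := (hGpos _ (le_min hm hs)).ne'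
    simp only [if_pos hyc]
    field_simp
    ring
  by_cases hsm : s ≤ min y c
  · simp only [if_neg hyc, if_pos hsm, if_neg (not_lt.mpr hsm), min_eq_right hsm]
    ring
  · simp only [if_neg hyc, if_neg hsm, if_pos (not_le.mp hsm), min_eq_left (not_le.mp hsm).le]
    ring

theorem stmt_7_general {Ω : Type*} [MeasurableSpace Ω] (μ : Measure Ω) [IsProbabilityMeasure μ]
    (Y C : Ω → ℝ)
    (hYnn : ∀ ω, 0 ≤ Y ω) (hCnn : ∀ ω, 0 ≤ C ω)
    (s : ℝ) (hs : 0 < s)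
    (Gstar : ℝ → ℝ) (hGdiff : ContDiffOn ℝ 1 Gstar (Set.Ici 0))
    (hGrange : ∀ u, 0 ≤ u → 0 < Gstar u ∧ Gstar u ≤ 1) (hG0 : Gstar 0 = 1) :
    ∫ ω, ( ((if Y ω ≤ C ω then (1:ℝ) else 0)
            + (1 - if Y ω ≤ C ω then (1:ℝ) else 0) * (if s ≤ min (Y ω) (C ω) then (1:ℝ) else 0))
          / Gstar (min (min (Y ω) (C ω)) s)
        + (1 - if Y ω ≤ C ω then (1:ℝ) else 0) * (if min (Y ω) (C ω) < s then (1:ℝ) else 0)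
          / Gstar (min (Y ω) (C ω))
        + ∫ u in (0:ℝ)..(min (Y ω) (C ω)),
            (if u < s then derivWithin Gstar (Set.Ici 0) u / (Gstar u) ^ 2 else 0) ) ∂μ = 1 := by
  have hGpos : ∀ u, 0 ≤ u → 0 < Gstar u := fun u hu => (hGrange u hu).1
  simp_rw [censoringWeightedIntegrand_eq_one hGdiff hGpos hG0 hs.le (hYnn _) (hCnn _)]
  simp

/-- `E[h_t(G*)(Õ)] = 1` (Lemma 2, per-stratum form): for ANY candidate censoring
survival function `G*` (continuously differentiable on `[0,∞)`, with values in
`(0,1]` and `G*(0) = 1`), with `Ỹ = min(Y,C)` and `Δ = 1{Y ≤ C}`,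
`E[(Δ + (1−Δ)·1{Ỹ ≥ s})/G*(min(Ỹ,s)) + (1−Δ)·1{Ỹ < s}/G*(Ỹ)
   + ∫₀^{Ỹ} 1{u < s}·(G*)′(u)/G*(u)² du] = 1`. -/
theorem stmt_7 {Ω : Type*} [MeasurableSpace Ω] (μ : Measure Ω) [IsProbabilityMeasure μ]
    (Y C : Ω → ℝ) (hY : Measurable Y) (hC : Measurable C)
    (hYnn : ∀ ω, 0 ≤ Y ω) (hCnn : ∀ ω, 0 ≤ C ω)
    (hindep : IndepFun Y C μ)
    (hYatom : NoAtoms (μ.map Y)) (hCatom : NoAtoms (μ.map C))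
    (s : ℝ) (hs : 0 < s)
    (Gstar : ℝ → ℝ) (hGdiff : ContDiffOn ℝ 1 Gstar (Set.Ici 0))
    (hGrange : ∀ u, 0 ≤ u → 0 < Gstar u ∧ Gstar u ≤ 1) (hG0 : Gstar 0 = 1) :
    ∫ ω, ( ((if Y ω ≤ C ω then (1:ℝ) else 0)
            + (1 - if Y ω ≤ C ω then (1:ℝ) else 0) * (if s ≤ min (Y ω) (C ω) then (1:ℝ) else 0))
          / Gstar (min (min (Y ω) (C ω)) s)
        + (1 - if Y ω ≤ C ω then (1:ℝ) else 0) * (if min (Y ω) (C ω) < s then (1:ℝ) else 0)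
          / Gstar (min (Y ω) (C ω))
        + ∫ u in (0:ℝ)..(min (Y ω) (C ω)),
            (if u < s then derivWithin Gstar (Set.Ici 0) u / (Gstar u) ^ 2 else 0) ) ∂μ = 1 :=
  stmt_7_general μ Y C hYnn hCnn s hs Gstar hGdiff hGrange hG0
end

section
/- Let Y and C be independent random variables with values in [0,∞) on a probability space (Ω, 𝓕, ℙ). Let F(u) = ℙ[Y ≤ u] and G(u) = ℙ[C ≥ u], and assume F and G are continuous, F(s) < 1 and G(s) > 0 for a fixed s > 0. Let G* : [0,∞) → (0,1] be continuously differentiable with G*(0) = 1. With Ỹ = min(Y,C) and Δ = 1{Y ≤ C}, E[ Δ·1{Y ≤ s}/G*(Y) + (1−Δ)·1{Ỹ ≤ s}·((F(s) − F(Ỹ))/(1 − F(Ỹ)))/G*(Ỹ) + ∫₀^{min(Ỹ,s)} ((F(s) − F(u))/(1 − F(u)))·(G*)′(u)/G*(u)² du ] = F(s). (This is the core of Lemma 2 of the paper in per-stratum, single-arm form: the augmented inverse-probability-weighted estimating function for F(s) is unbiased regardless of whether the candidate censoring survival function G* equals the true G, provided the failure distribution F is correct.) -/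
/-!
By independence and Fubini it suffices to show that, for every fixed censoring time `c ≥ 0`, the
`Y`-expectation of the integrand is `F(s)`. Write `H = 1 / G*`, `m = min(c, s)` and
`l(u) = (F(s) - F(u)) / (1 - F(u))`. Expanding `H(Y) = H(0) + ∫₀^Y H'` and exchanging the
`Y`-expectation with the `u`-integral gives

* `E[1{Y ≤ m} H(Y)] = F(m) H(0) + ∫₀^m (F(m) - F(u)) H'(u) du`,
* `E[∫₀^{min(Y, m)} l H'] = ∫₀^m ℙ(Y > u) l(u) H'(u) du = ∫₀^m (F(s) - F(u)) H'(u) du`,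
* `E[1{c < Y} 1{c ≤ s} l(c) H(c)] = 1{c ≤ s} (F(s) - F(c)) H(c)`.

The two integrals combine to `(F(m) - F(s)) (H(m) - H(0))`, and in both cases `c ≤ s` and `c > s`
the sum collapses to `F(s) H(0) = F(s)`.
-/

open MeasureTheory ProbabilityTheory Set

lemma integral_comp_prodMk_of_indepFun {Ω α β : Type*} [MeasurableSpace Ω] [MeasurableSpace α]
    [MeasurableSpace β] {μ : Measure Ω} [IsFiniteMeasure μ] {X : Ω → α} {Z : Ω → β}
    (hX : Measurable X) (hZ : Measurable Z) (hXZ : IndepFun X Z μ) {Φ : α × β → ℝ}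
    (hΦ : AEStronglyMeasurable Φ ((μ.map X).prod (μ.map Z)))
    (hint : Integrable (fun ω => Φ (X ω, Z ω)) μ) :
    ∫ ω, Φ (X ω, Z ω) ∂μ = ∫ z, ∫ x, Φ (x, z) ∂(μ.map X) ∂(μ.map Z) := by
  have hXZm : AEMeasurable (fun ω => (X ω, Z ω)) μ := (hX.prodMk hZ).aemeasurable
  have hmap := (indepFun_iff_map_prod_eq_prod_map_map hX.aemeasurable hZ.aemeasurable).1 hXZ
  rw [← hmap] at hΦ
  rw [← integral_map hXZm hΦ, hmap]
  exact integral_prod_symm Φ (hmap ▸ (integrable_map_measure hΦ hXZm).2 hint)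

section Fubini

variable {α β : Type*} [MeasurableSpace α] [MeasurableSpace β] {ν : Measure α} {ρ : Measure β}
  [IsFiniteMeasure ν] [SFinite ρ] {g : β → ℝ} {A : Set (α × β)}

lemma integrable_indicator_comp_snd (hg : Integrable g ρ) (hA : MeasurableSet A) :
    Integrable (A.indicator fun p => g p.2) (ν.prod ρ) :=
  (hg.comp_snd ν).indicator hA

lemma integral_integral_indicator_comp_snd (hg : Integrable g ρ) (hA : MeasurableSet A) :
    ∫ y, ∫ u, A.indicator (fun p => g p.2) (y, u) ∂ρ ∂ν
      = ∫ u, ν.real {y | (y, u) ∈ A} * g u ∂ρ := by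
  rw [integral_integral_swap (f := fun y u => A.indicator (fun p => g p.2) (y, u))
    (integrable_indicator_comp_snd hg hA)]
  refine integral_congr_ae (Filter.Eventually.of_forall fun u => ?_)
  have hslice : (fun y => A.indicator (fun p => g p.2) (y, u))
      = {y | (y, u) ∈ A}.indicator fun _ => g u := by
    ext y; simp [indicator]
  dsimp only
  rw [hslice]
  exact integral_indicator_const (g u) (measurable_prodMk_right hA)

end Fubini

section HalfLine

variable {ν : Measure ℝ} {f : ℝ → ℝ} {m y : ℝ} {T : Set ℝ}

/- The strict inequality `u < y` makes the `y`-slices `Ioi u ∩ T`, whose measures are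
differences of values of the distribution function. -/
lemma indicator_intervalIntegral_min_eq (hy : 0 ≤ y) (hm : 0 ≤ m) :
    T.indicator (fun y => ∫ u in 0..min y m, f u) y
      = ∫ u in Ioc 0 m,
          ({p : ℝ × ℝ | p.2 < p.1} ∩ Prod.fst ⁻¹' T).indicator (fun p => f p.2) (y, u) := by
  by_cases hyT : y ∈ T
  · have hslice : ∀ u,
        ({p : ℝ × ℝ | p.2 < p.1} ∩ Prod.fst ⁻¹' T).indicator (fun p => f p.2) (y, u)
          = (Iio y).indicator f u := fun u => by simp [indicator, hyT]
    have hIoc : Ioc 0 (min y m) = Ioc 0 m ∩ Iic y := by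
      ext u; simp only [mem_Ioc, mem_inter_iff, mem_Iic, le_min_iff]; tauto
    simp only [hslice, indicator_of_mem hyT, setIntegral_indicator measurableSet_Iio,
      intervalIntegral.integral_of_le (le_min hy hm), hIoc]
    exact setIntegral_congr_set (Filter.EventuallyEq.rfl.inter Iio_ae_eq_Iic.symm)
  · simp [indicator, hyT]

lemma integrable_indicator_intervalIntegral_min [IsFiniteMeasure ν] (hν : ∀ᵐ y ∂ν, 0 ≤ y)
    (hm : 0 ≤ m) (hf : IntegrableOn f (Ioc 0 m)) (hT : MeasurableSet T) :
    Integrable (T.indicator fun y => ∫ u in 0..min y m, f u) ν := by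
  refine (integrable_indicator_comp_snd (ν := ν) hf ((measurableSet_lt measurable_snd
    measurable_fst).inter (measurable_fst hT))).integral_prod_left.congr ?_
  filter_upwards [hν] with y hy using (indicator_intervalIntegral_min_eq hy hm).symm

lemma integral_indicator_intervalIntegral_min [IsFiniteMeasure ν] (hν : ∀ᵐ y ∂ν, 0 ≤ y)
    (hm : 0 ≤ m) (hf : IntegrableOn f (Ioc 0 m)) (hT : MeasurableSet T) :
    ∫ y, T.indicator (fun y => ∫ u in 0..min y m, f u) y ∂ν
      = ∫ u in 0..m, ν.real (Ioi u ∩ T) * f u := by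
  rw [integral_congr_ae (hν.mono fun y hy => indicator_intervalIntegral_min_eq hy hm),
    integral_integral_indicator_comp_snd hf
      ((measurableSet_lt measurable_snd measurable_fst).inter (measurable_fst hT)),
    intervalIntegral.integral_of_le hm]
  rfl

variable {H h : ℝ → ℝ}

lemma indicator_Iic_ae_eq (hν : ∀ᵐ y ∂ν, 0 ≤ y)
    (hH : ∀ t ∈ Icc 0 m, ∫ u in 0..t, h u = H t - H 0) :
    (Iic m).indicator H =ᵐ[ν]
      (Iic m).indicator (fun _ => H 0) + (Iic m).indicator fun y => ∫ u in 0..min y m, h u := by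
  filter_upwards [hν] with y hy
  by_cases hym : y ≤ m
  · simp only [Pi.add_apply, indicator_of_mem (mem_Iic.2 hym), min_eq_left hym, hH y ⟨hy, hym⟩]
    ring
  · simp only [Pi.add_apply, indicator_of_notMem (show y ∉ Iic m from hym), add_zero]

lemma integrable_indicator_Iic [IsFiniteMeasure ν] (hν : ∀ᵐ y ∂ν, 0 ≤ y) (hm : 0 ≤ m)
    (hh : IntegrableOn h (Ioc 0 m))
    (hH : ∀ t ∈ Icc 0 m, ∫ u in 0..t, h u = H t - H 0) :
    Integrable ((Iic m).indicator H) ν :=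
  (((integrable_const _).indicator measurableSet_Iic).add
    (integrable_indicator_intervalIntegral_min hν hm hh measurableSet_Iic)).congr
    (indicator_Iic_ae_eq hν hH).symm

end HalfLine

section CDF

variable {ν : Measure ℝ} {s u : ℝ}

lemma measureReal_Ioc_eq_cdf_sub [IsProbabilityMeasure ν] {a b : ℝ} (hab : a ≤ b) :
    ν.real (Ioc a b) = cdf ν b - cdf ν a := by
  have hdiff : Ioc a b = Iic b \ Iic a := by ext x; simp [and_comm]
  rw [hdiff, measureReal_sdiff (Iic_subset_Iic.2 hab) measurableSet_Iic,
    cdf_eq_real, cdf_eq_real]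

lemma measureReal_Ioi_eq_one_sub_cdf [IsProbabilityMeasure ν] (a : ℝ) :
    ν.real (Ioi a) = 1 - cdf ν a := by
  rw [← compl_Iic, probReal_compl_eq_one_sub measurableSet_Iic, cdf_eq_real]

lemma abs_cdf_sub_cdf_le_one (x y : ℝ) : |cdf ν x - cdf ν y| ≤ 1 :=
  abs_sub_le_of_nonneg_of_le (cdf_nonneg ν x) (cdf_le_one ν x) (cdf_nonneg ν y) (cdf_le_one ν y)

/-- The term `l(u) = E[1{Y ≤ s} | Y ≥ u]` of the augmentation, for `Y` with distribution
function `F`; the `min` makes it vanish for `u ≥ s`, as it should. -/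
noncomputable def condFailureProb (F : ℝ → ℝ) (s u : ℝ) : ℝ :=
  (F s - F (min u s)) / (1 - F (min u s))

lemma condFailureProb_of_le (F : ℝ → ℝ) (h : u ≤ s) :
    condFailureProb F s u = (F s - F u) / (1 - F u) := by
  rw [condFailureProb, min_eq_left h]

lemma one_sub_cdf_mul_condFailureProb (h : u ≤ s) :
    (1 - cdf ν u) * condFailureProb (cdf ν) s u = cdf ν s - cdf ν u := by
  rw [condFailureProb_of_le _ h]
  rcases (sub_nonneg.2 (cdf_le_one ν u)).eq_or_lt with h1 | h1
  · have : cdf ν s = cdf ν u :=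
      le_antisymm (by linarith [cdf_le_one ν s]) (monotone_cdf ν h)
    rw [← h1, this]
    ring
  · field_simp

lemma abs_condFailureProb_le_one : |condFailureProb (cdf ν) s u| ≤ 1 := by
  have hmono := monotone_cdf ν (min_le_right u s)
  have hle := cdf_le_one ν (min u s)
  rw [condFailureProb, abs_of_nonneg (div_nonneg (by linarith) (by linarith))]
  exact div_le_one_of_le₀ (by linarith [cdf_le_one ν s]) (by linarith)

lemma measurable_condFailureProb : Measurable (condFailureProb (cdf ν) s) := by
  have := (monotone_cdf ν).measurable
  unfold condFailureProb
  fun_prop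

lemma integrableOn_condFailureProb_mul {h : ℝ → ℝ} {S : Set ℝ} (hh : IntegrableOn h S) :
    IntegrableOn (fun u => condFailureProb (cdf ν) s u * h u) S :=
  hh.bdd_mul measurable_condFailureProb.aestronglyMeasurable
    (ae_of_all _ fun _ => abs_condFailureProb_le_one)

variable {H h : ℝ → ℝ} {m : ℝ}

lemma intervalIntegral_cdf_sub_mul_sub (hm : 0 ≤ m) (hh : IntegrableOn h (Ioc 0 m))
    (hH : ∫ u in 0..m, h u = H m - H 0) (x : ℝ) :
    (∫ u in 0..m, (cdf ν m - cdf ν u) * h u) - ∫ u in 0..m, (cdf ν x - cdf ν u) * h u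
      = (cdf ν m - cdf ν x) * (H m - H 0) := by
  have hI : ∀ z, IntervalIntegrable (fun u => (cdf ν z - cdf ν u) * h u) volume 0 m :=
    fun z => (intervalIntegrable_iff_integrableOn_Ioc_of_le hm).2 <|
      hh.bdd_mul ((monotone_cdf ν).measurable.const_sub _).aestronglyMeasurable
        (ae_of_all _ fun u => abs_cdf_sub_cdf_le_one z u)
  rw [← intervalIntegral.integral_sub (hI m) (hI x)]
  simp only [← sub_mul, sub_sub_sub_cancel_right]
  rw [intervalIntegral.integral_const_mul, hH]

variable [IsProbabilityMeasure ν]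

lemma integral_indicator_Iic (hν : ∀ᵐ y ∂ν, 0 ≤ y) (hm : 0 ≤ m)
    (hh : IntegrableOn h (Ioc 0 m)) (hH : ∀ t ∈ Icc 0 m, ∫ u in 0..t, h u = H t - H 0) :
    ∫ y, (Iic m).indicator H y ∂ν = cdf ν m * H 0 + ∫ u in 0..m, (cdf ν m - cdf ν u) * h u := by
  rw [integral_congr_ae (indicator_Iic_ae_eq hν hH),
    integral_add' ((integrable_const _).indicator measurableSet_Iic)
      (integrable_indicator_intervalIntegral_min hν hm hh measurableSet_Iic),
    integral_indicator_const _ measurableSet_Iic, ← cdf_eq_real, smul_eq_mul,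
    integral_indicator_intervalIntegral_min hν hm hh measurableSet_Iic]
  refine congrArg _ (intervalIntegral.integral_congr fun u hu => ?_)
  rw [uIcc_of_le hm] at hu
  simp only [Ioi_inter_Iic, measureReal_Ioc_eq_cdf_sub hu.2]

lemma integral_intervalIntegral_condFailureProb (hν : ∀ᵐ y ∂ν, 0 ≤ y) (hm : 0 ≤ m)
    (hms : m ≤ s) (hh : IntegrableOn h (Ioc 0 m)) :
    ∫ y, (∫ u in 0..min y m, condFailureProb (cdf ν) s u * h u) ∂ν
      = ∫ u in 0..m, (cdf ν s - cdf ν u) * h u := by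
  have hfub := integral_indicator_intervalIntegral_min hν hm
    (integrableOn_condFailureProb_mul (ν := ν) (s := s) hh) MeasurableSet.univ
  simp only [indicator_univ, inter_univ] at hfub
  rw [hfub]
  refine intervalIntegral.integral_congr fun u hu => ?_
  rw [uIcc_of_le hm] at hu
  simp only [measureReal_Ioi_eq_one_sub_cdf, ← mul_assoc,
    one_sub_cdf_mul_condFailureProb (hu.2.trans hms)]

end CDF

section AIPW

/-- The augmented IPW integrand at `Y = y`, `C = c`, written with `H = 1 / G*` and
`h = H' = -(G*)' / G*²` in place of `G*`. -/
noncomputable def aipwIntegrand (F H h : ℝ → ℝ) (s y c : ℝ) : ℝ :=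
  (if y ≤ c then 1 else 0) * (if y ≤ s then 1 else 0) * H y
    + (1 - if y ≤ c then 1 else 0) * (if min y c ≤ s then 1 else 0)
        * condFailureProb F s (min y c) * H (min y c)
    - ∫ u in 0..min (min y c) s, condFailureProb F s u * h u

variable {F H h : ℝ → ℝ} {s y c : ℝ}

lemma aipwIntegrand_eq_indicator :
    aipwIntegrand F H h s y c
      = (Iic (min c s)).indicator H y
        + (Ioi c).indicator (fun _ => (if c ≤ s then 1 else 0) * condFailureProb F s c * H c) y
        - ∫ u in 0..min y (min c s), condFailureProb F s u * h u := by
  rw [aipwIntegrand, min_assoc]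
  congr 2
  · by_cases hyc : y ≤ c <;> by_cases hys : y ≤ s <;> simp [indicator, hyc, hys]
  · by_cases hyc : y ≤ c
    · simp [indicator, hyc]
    · simp [indicator, hyc, min_eq_right (not_le.1 hyc).le, not_le.1 hyc]

variable {ν : Measure ℝ}

lemma integral_aipwIntegrand [IsProbabilityMeasure ν] (hν : ∀ᵐ y ∂ν, 0 ≤ y) (hs : 0 ≤ s)
    (hc : 0 ≤ c) (hh : IntegrableOn h (Ioc 0 s))
    (hH : ∀ t ∈ Icc 0 s, ∫ u in 0..t, h u = H t - H 0) :
    ∫ y, aipwIntegrand (cdf ν) H h s y c ∂ν = cdf ν s * H 0 := by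
  set m := min c s
  have hm0 : 0 ≤ m := le_min hc hs
  have hms : m ≤ s := min_le_right _ _
  have hhm : IntegrableOn h (Ioc 0 m) := hh.mono_set (Ioc_subset_Ioc_right hms)
  have hHm : ∀ t ∈ Icc 0 m, ∫ u in 0..t, h u = H t - H 0 :=
    fun t ht => hH t ⟨ht.1, ht.2.trans hms⟩
  have hint1 := integrable_indicator_Iic hν hm0 hhm hHm
  have hint2 : Integrable ((Ioi c).indicator
      fun _ => (if c ≤ s then 1 else 0) * condFailureProb (cdf ν) s c * H c) ν :=
    (integrable_const _).indicator measurableSet_Ioi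
  have hint3 : Integrable (fun y => ∫ u in 0..min y m, condFailureProb (cdf ν) s u * h u) ν := by
    simpa using integrable_indicator_intervalIntegral_min hν hm0
      (integrableOn_condFailureProb_mul (ν := ν) (s := s) hhm) MeasurableSet.univ
  have hcomb := intervalIntegral_cdf_sub_mul_sub hm0 hhm (hHm m ⟨hm0, le_rfl⟩) (ν := ν) s
  have hdecomp : (fun y => aipwIntegrand (cdf ν) H h s y c)
      = (Iic m).indicator H
        + ((Ioi c).indicator
            fun _ => (if c ≤ s then 1 else 0) * condFailureProb (cdf ν) s c * H c)
        - fun y => ∫ u in 0..min y m, condFailureProb (cdf ν) s u * h u :=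
    funext fun y => aipwIntegrand_eq_indicator
  rw [hdecomp, integral_sub' (hint1.add hint2) hint3, integral_add' hint1 hint2,
    integral_indicator_Iic hν hm0 hhm hHm, integral_indicator_const _ measurableSet_Ioi,
    integral_intervalIntegral_condFailureProb hν hm0 hms hhm, measureReal_Ioi_eq_one_sub_cdf,
    smul_eq_mul]
  rcases le_or_gt c s with hcs | hsc
  · have hl := one_sub_cdf_mul_condFailureProb (ν := ν) hcs
    rw [show m = c from min_eq_left hcs] at hcomb ⊢
    rw [if_pos hcs]
    linear_combination hcomb + H c * hl
  · rw [show m = s from min_eq_right hsc.le] at hcomb ⊢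
    rw [if_neg hsc.not_ge]
    linear_combination hcomb

lemma measurable_aipwIntegrand (hH : Measurable H) (hh : Continuous h) :
    Measurable fun p : ℝ × ℝ => aipwIntegrand (cdf ν) H h s p.1 p.2 := by
  have hl : Measurable (condFailureProb (cdf ν) s) := measurable_condFailureProb
  have hmin : Measurable fun p : ℝ × ℝ => min p.1 p.2 := measurable_fst.min measurable_snd
  have hind : ∀ {f g : ℝ × ℝ → ℝ}, Measurable f → Measurable g →
      Measurable fun p => if f p ≤ g p then (1 : ℝ) else 0 := fun hf hg =>
    Measurable.ite (measurableSet_le hf hg) measurable_const measurable_const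
  have hprim : Continuous fun t => ∫ u in 0..t, condFailureProb (cdf ν) s u * h u :=
    intervalIntegral.continuous_primitive
      (fun _ _ => intervalIntegrable_iff.2 (integrableOn_condFailureProb_mul hh.integrableOn_Ioc)) 0
  refine Measurable.sub (Measurable.add ?_ ?_) ?_
  · exact ((hind measurable_fst measurable_snd).mul
      (hind measurable_fst measurable_const)).mul (hH.comp measurable_fst)
  · exact ((((measurable_const.sub (hind measurable_fst measurable_snd)).mul
      (hind hmin measurable_const)).mul (hl.comp hmin))).mul (hH.comp hmin)
  · exact (hprim.comp ((continuous_fst.min continuous_snd).min continuous_const)).measurable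

lemma norm_aipwIntegrand_le {K K' : ℝ} (hs : 0 ≤ s) (hy : 0 ≤ y) (hc : 0 ≤ c)
    (hH : ∀ u ∈ Icc 0 s, ‖H u‖ ≤ K) (hh : ∀ u ∈ Icc 0 s, ‖h u‖ ≤ K') :
    ‖aipwIntegrand (cdf ν) H h s y c‖ ≤ 2 * K + K' * s := by
  have hK : 0 ≤ K := (norm_nonneg _).trans (hH 0 ⟨le_rfl, hs⟩)
  have hK' : 0 ≤ K' := (norm_nonneg _).trans (hh 0 ⟨le_rfl, hs⟩)
  have hl : ∀ u, ‖condFailureProb (cdf ν) s u‖ ≤ 1 := fun u => abs_condFailureProb_le_one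
  have h1 : ‖(Iic (min c s)).indicator H y‖ ≤ K := by
    by_cases hyc : y ∈ Iic (min c s)
    · rw [indicator_of_mem hyc]
      exact hH y ⟨hy, hyc.trans (min_le_right _ _)⟩
    · rwa [indicator_of_notMem hyc, norm_zero]
  have h2 : ‖(Ioi c).indicator
      (fun _ => (if c ≤ s then 1 else 0) * condFailureProb (cdf ν) s c * H c) y‖ ≤ K := by
    refine norm_indicator_le_norm_self _ _ |>.trans ?_
    split_ifs with hcs
    · rw [one_mul, norm_mul]
      exact (mul_le_of_le_one_left (norm_nonneg _) (hl c)).trans (hH c ⟨hc, hcs⟩)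
    · simpa using hK
  have h3 : ‖∫ u in 0..min y (min c s), condFailureProb (cdf ν) s u * h u‖ ≤ K' * s := by
    have ht : 0 ≤ min y (min c s) := le_min hy (le_min hc hs)
    have hts : min y (min c s) ≤ s := (min_le_right _ _).trans (min_le_right _ _)
    refine (intervalIntegral.norm_integral_le_of_norm_le_const (C := K')
      fun u hu => ?_).trans ?_
    · rw [uIoc_of_le ht] at hu
      rw [norm_mul]
      exact (mul_le_of_le_one_left (norm_nonneg _) (hl u)).trans
        (hh u ⟨hu.1.le, hu.2.trans hts⟩)
    · rw [sub_zero, abs_of_nonneg ht]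
      exact mul_le_mul_of_nonneg_left hts hK'
  rw [aipwIntegrand_eq_indicator]
  calc _ ≤ _ := norm_sub_le _ _
    _ ≤ ‖(Iic (min c s)).indicator H y‖ + ‖(Ioi c).indicator
            (fun _ => (if c ≤ s then 1 else 0) * condFailureProb (cdf ν) s c * H c) y‖
          + ‖∫ u in 0..min y (min c s), condFailureProb (cdf ν) s u * h u‖ := by
      gcongr
      exact norm_add_le _ _
    _ ≤ 2 * K + K' * s := by linarith

end AIPW

section InverseWeight

variable {G : ℝ → ℝ}

/-- `1 / G*` and its derivative `-(G*)' / G*²`, extended to `u < 0` by their values at `0`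
so that they are continuous on `ℝ`. -/
noncomputable def invWeight (G : ℝ → ℝ) (u : ℝ) : ℝ := (G (max u 0))⁻¹

noncomputable def invWeightDeriv (G : ℝ → ℝ) (u : ℝ) : ℝ :=
  -derivWithin G (Ici 0) (max u 0) / G (max u 0) ^ 2

lemma continuous_invWeight (hG : ContinuousOn G (Ici 0)) (hpos : ∀ u, 0 ≤ u → 0 < G u) :
    Continuous (invWeight G) :=
  (hG.comp_continuous (continuous_id.max continuous_const) fun u => le_max_right u 0).inv₀
    fun u => (hpos _ (le_max_right u 0)).ne'

lemma continuous_invWeightDeriv (hG : ContDiffOn ℝ 1 G (Ici 0))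
    (hpos : ∀ u, 0 ≤ u → 0 < G u) : Continuous (invWeightDeriv G) := by
  have hmax : Continuous fun u : ℝ => max u 0 := continuous_id.max continuous_const
  have hmem : ∀ u : ℝ, max u 0 ∈ Ici 0 := fun u => le_max_right u 0
  exact ((hG.continuousOn_derivWithin (uniqueDiffOn_Ici 0) le_rfl).comp_continuous
    hmax hmem).neg.div ((hG.continuousOn.comp_continuous hmax hmem).pow 2)
    fun u => pow_ne_zero _ (hpos _ (hmem u)).ne'

lemma integral_invWeightDeriv (hG : ContDiffOn ℝ 1 G (Ici 0)) (hpos : ∀ u, 0 ≤ u → 0 < G u)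
    {t : ℝ} (ht : 0 ≤ t) : ∫ u in 0..t, invWeightDeriv G u = invWeight G t - invWeight G 0 := by
  refine intervalIntegral.integral_eq_sub_of_hasDerivAt_of_le ht
    (continuous_invWeight hG.continuousOn hpos).continuousOn (fun x hx => ?_)
    ((continuous_invWeightDeriv hG hpos).intervalIntegrable _ _)
  have hx : 0 < x := hx.1
  have hGx : HasDerivAt G (derivWithin G (Ici 0) x) x :=
    (hG.differentiableOn one_ne_zero x hx.le).hasDerivWithinAt.hasDerivAt (Ici_mem_nhds hx)
  have hloc : invWeight G =ᶠ[nhds x] fun u => (G u)⁻¹ :=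
    (lt_mem_nhds hx).mono fun u hu => by rw [invWeight, max_eq_left hu.le]
  rw [invWeightDeriv, max_eq_left hx.le]
  exact (hGx.inv (hpos x hx.le).ne').congr_of_eventuallyEq hloc

lemma aipwIntegrand_invWeight {F : ℝ → ℝ} {s y c : ℝ} (hs : 0 ≤ s) (hy : 0 ≤ y) (hc : 0 ≤ c) :
    aipwIntegrand F (invWeight G) (invWeightDeriv G) s y c
      = (if y ≤ c then (1:ℝ) else 0) * (if y ≤ s then (1:ℝ) else 0) / G y
        + (1 - if y ≤ c then (1:ℝ) else 0) * (if min y c ≤ s then (1:ℝ) else 0)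
            * ((F s - F (min y c)) / (1 - F (min y c))) / G (min y c)
        + ∫ u in (0:ℝ)..(min (min y c) s),
            ((F s - F u) / (1 - F u)) * derivWithin G (Ici 0) u / (G u) ^ 2 := by
  have hyc : 0 ≤ min y c := le_min hy hc
  have ht : 0 ≤ min (min y c) s := le_min hyc hs
  have hT3 : ∫ u in 0..min (min y c) s, condFailureProb F s u * invWeightDeriv G u
      = -∫ u in 0..min (min y c) s,
          ((F s - F u) / (1 - F u)) * derivWithin G (Ici 0) u / (G u) ^ 2 := by
    rw [← intervalIntegral.integral_neg]
    refine intervalIntegral.integral_congr fun u hu => ?_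
    rw [uIcc_of_le ht] at hu
    rw [condFailureProb_of_le F (hu.2.trans (min_le_right _ _)), invWeightDeriv,
      max_eq_left hu.1]
    ring
  have hT2 : (if min y c ≤ s then (1:ℝ) else 0) * condFailureProb F s (min y c)
      = (if min y c ≤ s then (1:ℝ) else 0) * ((F s - F (min y c)) / (1 - F (min y c))) := by
    split_ifs with h
    · rw [condFailureProb_of_le F h]
    · simp only [zero_mul]
  rw [aipwIntegrand, invWeight, invWeight, max_eq_left hy, max_eq_left hyc, hT3,
    mul_assoc _ _ (condFailureProb F s _), hT2]
  ring

end InverseWeight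

theorem stmt_8_general {Ω : Type*} [MeasurableSpace Ω] (μ : Measure Ω) [IsProbabilityMeasure μ]
    (Y C : Ω → ℝ) (hY : Measurable Y) (hC : Measurable C)
    (hYnn : ∀ ω, 0 ≤ Y ω) (hCnn : ∀ ω, 0 ≤ C ω)
    (hindep : IndepFun Y C μ)
    (F : ℝ → ℝ)
    (hF : ∀ u, F u = (μ {ω | Y ω ≤ u}).toReal)
    (s : ℝ) (hs : 0 < s)
    (Gstar : ℝ → ℝ) (hGdiff : ContDiffOn ℝ 1 Gstar (Set.Ici 0))
    (hGrange : ∀ u, 0 ≤ u → 0 < Gstar u ∧ Gstar u ≤ 1) (hG0 : Gstar 0 = 1) :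
    ∫ ω, ( (if Y ω ≤ C ω then (1:ℝ) else 0) * (if Y ω ≤ s then (1:ℝ) else 0) / Gstar (Y ω)
        + (1 - if Y ω ≤ C ω then (1:ℝ) else 0) * (if min (Y ω) (C ω) ≤ s then (1:ℝ) else 0)
            * ((F s - F (min (Y ω) (C ω))) / (1 - F (min (Y ω) (C ω))))
            / Gstar (min (Y ω) (C ω))
        + ∫ u in (0:ℝ)..(min (min (Y ω) (C ω)) s),
            ((F s - F u) / (1 - F u)) * derivWithin Gstar (Set.Ici 0) u / (Gstar u) ^ 2 ) ∂μ
      = F s := by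
  have := Measure.isProbabilityMeasure_map (μ := μ) hY.aemeasurable
  have := Measure.isProbabilityMeasure_map (μ := μ) hC.aemeasurable
  obtain rfl : F = cdf (μ.map Y) := funext fun u => by
    rw [hF, cdf_eq_real, map_measureReal_apply hY measurableSet_Iic]; rfl
  have hpos : ∀ u, 0 ≤ u → 0 < Gstar u := fun u hu => (hGrange u hu).1
  have hH := continuous_invWeight hGdiff.continuousOn hpos
  have hh := continuous_invWeightDeriv hGdiff hpos
  obtain ⟨K, hK⟩ :=
    (isCompact_Icc (a := 0) (b := s)).exists_bound_of_continuousOn hH.continuousOn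
  obtain ⟨K', hK'⟩ :=
    (isCompact_Icc (a := 0) (b := s)).exists_bound_of_continuousOn hh.continuousOn
  have hmeas := measurable_aipwIntegrand (ν := μ.map Y) (s := s) hH.measurable hh
  simp_rw [← aipwIntegrand_invWeight hs.le (hYnn _) (hCnn _)]
  rw [integral_comp_prodMk_of_indepFun hY hC hindep hmeas.aestronglyMeasurable
    (.of_bound (hmeas.comp (hY.prodMk hC)).aestronglyMeasurable _
      (ae_of_all _ fun ω => norm_aipwIntegrand_le hs.le (hYnn ω) (hCnn ω) hK hK'))]
  have hYae : ∀ᵐ y ∂μ.map Y, 0 ≤ y :=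
    (ae_map_iff hY.aemeasurable measurableSet_Ici).2 (ae_of_all _ hYnn)
  have hCae : ∀ᵐ c ∂μ.map C, 0 ≤ c :=
    (ae_map_iff hC.aemeasurable measurableSet_Ici).2 (ae_of_all _ hCnn)
  rw [integral_congr_ae (hCae.mono fun c hc => integral_aipwIntegrand hYae hs.le hc
    hh.integrableOn_Ioc fun t ht => integral_invWeightDeriv hGdiff hpos ht.1)]
  simp [invWeight, hG0]

/-- Core of Lemma 2 in per-stratum, single-arm form: the augmented
inverse-probability-weighted estimating function for `F(s)` is unbiased for any
candidate censoring survival function `G*`, provided the failure distribution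
`F` is correct:
`E[Δ·1{Y ≤ s}/G*(Y) + (1−Δ)·1{Ỹ ≤ s}·((F(s)−F(Ỹ))/(1−F(Ỹ)))/G*(Ỹ)
   + ∫₀^{min(Ỹ,s)} ((F(s)−F(u))/(1−F(u)))·(G*)′(u)/G*(u)² du] = F(s)`. -/
theorem stmt_8 {Ω : Type*} [MeasurableSpace Ω] (μ : Measure Ω) [IsProbabilityMeasure μ]
    (Y C : Ω → ℝ) (hY : Measurable Y) (hC : Measurable C)
    (hYnn : ∀ ω, 0 ≤ Y ω) (hCnn : ∀ ω, 0 ≤ C ω)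
    (hindep : IndepFun Y C μ)
    (F G : ℝ → ℝ)
    (hF : ∀ u, F u = (μ {ω | Y ω ≤ u}).toReal)
    (hG : ∀ u, G u = (μ {ω | u ≤ C ω}).toReal)
    (hFcont : Continuous F) (hGcont : Continuous G)
    (s : ℝ) (hs : 0 < s) (hFs : F s < 1) (hGs : 0 < G s)
    (Gstar : ℝ → ℝ) (hGdiff : ContDiffOn ℝ 1 Gstar (Set.Ici 0))
    (hGrange : ∀ u, 0 ≤ u → 0 < Gstar u ∧ Gstar u ≤ 1) (hG0 : Gstar 0 = 1) :
    ∫ ω, ( (if Y ω ≤ C ω then (1:ℝ) else 0) * (if Y ω ≤ s then (1:ℝ) else 0) / Gstar (Y ω)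
        + (1 - if Y ω ≤ C ω then (1:ℝ) else 0) * (if min (Y ω) (C ω) ≤ s then (1:ℝ) else 0)
            * ((F s - F (min (Y ω) (C ω))) / (1 - F (min (Y ω) (C ω))))
            / Gstar (min (Y ω) (C ω))
        + ∫ u in (0:ℝ)..(min (min (Y ω) (C ω)) s),
            ((F s - F u) / (1 - F u)) * derivWithin Gstar (Set.Ici 0) u / (Gstar u) ^ 2 ) ∂μ
      = F s :=
  stmt_8_general μ Y C hY hC hYnn hCnn hindep F hF s hs Gstar hGdiff hGrange hG0
end

section
/- For every γ ∈ ℝ and all a, b ∈ [0,1], writing d_a = 1 − a + a·exp(γ) and d_b = 1 − b + b·exp(γ) (both positive), the following identity holds: exp(γ)·(b − a)/d_a² + exp(γ)·a/d_a − exp(γ)·b/d_b = exp(γ)·(exp(γ) − 1)·(a − b)² / (d_a²·d_b). (This is the pointwise identity underlying the computation of the second-order bias term H₂ in the proof of Lemma 3: with a = F*_t(s|x) a working value and b = F_t(s|x) the truth, the bias of the influence-function estimating equation under a misspecified outcome model is exactly quadratic in F* − F.) -/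
/-! With `d x = 1 - x + x e`, the left-hand side is the first-order Taylor remainder of
`x ↦ e x / d x` at `a`, evaluated at `b` (its derivative is `e / d²`). Since `d` is affine with
slope `e - 1`, clearing denominators leaves exactly `e (e - 1) (a - b)²`; all that is needed is
that neither denominator vanishes, which holds on `[0, 1]` because `d x` is a convex combination
of `1` and `e > 0`. -/

open Real

theorem one_sub_add_mul_pos {K : Type*} [Field K] [LinearOrder K] [IsStrictOrderedRing K]
    {e x : K} (he : 0 < e) (hx : x ∈ Set.Icc (0 : K) 1) : 0 < 1 - x + x * e := by
  obtain ⟨hx0, hx1⟩ := hx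
  rcases hx0.eq_or_lt with rfl | hx0
  · simp
  · nlinarith [mul_pos hx0 he]

theorem taylor_remainder_tilt_eq {K : Type*} [Field K] {e a b : K}
    (ha : 1 - a + a * e ≠ 0) (hb : 1 - b + b * e ≠ 0) :
    e * (b - a) / (1 - a + a * e) ^ 2 + e * a / (1 - a + a * e) - e * b / (1 - b + b * e)
      = e * (e - 1) * (a - b) ^ 2 / ((1 - a + a * e) ^ 2 * (1 - b + b * e)) := by
  have ha2 : (1 - a + a * e) ^ 2 ≠ 0 := pow_ne_zero 2 ha
  rw [div_add_div _ _ ha2 ha, div_sub_div _ _ (mul_ne_zero ha2 ha) hb,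
    div_eq_div_iff (mul_ne_zero (mul_ne_zero ha2 ha) hb) (mul_ne_zero ha2 hb)]
  ring

/-- Pointwise identity underlying the second-order bias term `H₂` in Lemma 3:
with `d_a = 1 − a + a·eᵞ` and `d_b = 1 − b + b·eᵞ`,
`eᵞ·(b−a)/d_a² + eᵞ·a/d_a − eᵞ·b/d_b = eᵞ·(eᵞ−1)·(a−b)²/(d_a²·d_b)`. -/
theorem stmt_11 (γ a b : ℝ) (ha : a ∈ Set.Icc (0:ℝ) 1) (hb : b ∈ Set.Icc (0:ℝ) 1) :
    Real.exp γ * (b - a) / (1 - a + a * Real.exp γ) ^ 2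
      + Real.exp γ * a / (1 - a + a * Real.exp γ)
      - Real.exp γ * b / (1 - b + b * Real.exp γ)
    = Real.exp γ * (Real.exp γ - 1) * (a - b) ^ 2
        / ((1 - a + a * Real.exp γ) ^ 2 * (1 - b + b * Real.exp γ)) :=
  taylor_remainder_tilt_eq (one_sub_add_mul_pos (exp_pos γ) ha).ne'
    (one_sub_add_mul_pos (exp_pos γ) hb).ne'
end
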